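/- Let P, P' : ℝ → Prop be time-indexed predicates and let t, a, τ, b ∈ ℝ with 0 ≤ a < τ ≤ b. Then (∃ t' ∈ (t+a, t+b], P' t' ∧ ∀ s ∈ [t, t'], P s) if and only if [∃ t' ∈ (t+a, t+τ), P' t' ∧ ∀ s ∈ [t, t'], P s] ∨ [(∀ s ∈ [t, t+τ), P s) ∧ ((P (t+τ) ∧ P' (t+τ)) ∨ (∃ t' ∈ (t+τ, t+b], P' t' ∧ ∀ s ∈ [t, t'], P s))]. -/

import Mathlib

/-! Split the witness `t'` according to whether it lies before, at or after `t + τ`; since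
`t ≤ t + τ`, the interval `[t, t + τ]` is `[t, t + τ)` together with its right endpoint, and
`[t, t']` contains `[t, t + τ)` whenever `t' > t + τ`. -/

open Set

section LinearOrder

variable {α : Type*} [LinearOrder α]

theorem exists_mem_Ioc_iff_split {p : α → Prop} {x c y : α} (hxc : x < c) (hcy : c ≤ y) :
    (∃ z ∈ Ioc x y, p z) ↔ (∃ z ∈ Ioo x c, p z) ∨ p c ∨ ∃ z ∈ Ioc c y, p z := by
  constructor
  · rintro ⟨z, ⟨hxz, hzy⟩, hz⟩
    rcases lt_trichotomy z c with hzc | rfl | hcz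
    · exact Or.inl ⟨z, ⟨hxz, hzc⟩, hz⟩
    · exact Or.inr (Or.inl hz)
    · exact Or.inr (Or.inr ⟨z, ⟨hcz, hzy⟩, hz⟩)
  · rintro (⟨z, ⟨hxz, hzc⟩, hz⟩ | hc | ⟨z, ⟨hcz, hzy⟩, hz⟩)
    · exact ⟨z, ⟨hxz, hzc.le.trans hcy⟩, hz⟩
    · exact ⟨c, ⟨hxc, hcy⟩, hc⟩
    · exact ⟨z, ⟨hxc.trans hcz, hzy⟩, hz⟩

theorem forall_mem_Icc_iff_forall_mem_Ico_and {p : α → Prop} {t c : α} (htc : t ≤ c) :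
    (∀ s ∈ Icc t c, p s) ↔ (∀ s ∈ Ico t c, p s) ∧ p c := by
  rw [← Ico_insert_right htc, forall_mem_insert, and_comm]

end LinearOrder

/-- Proposition 1 variant: syntactic separation of until at time τ for (a,b]. -/
theorem until_separation_Ioc (P P' : ℝ → Prop) (t a τ b : ℝ)
    (h0a : 0 ≤ a) (haτ : a < τ) (hτb : τ ≤ b) :
    (∃ t' ∈ Set.Ioc (t + a) (t + b), P' t' ∧ ∀ s ∈ Set.Icc t t', P s) ↔
      ((∃ t' ∈ Set.Ioo (t + a) (t + τ), P' t' ∧ ∀ s ∈ Set.Icc t t', P s) ∨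
        ((∀ s ∈ Set.Ico t (t + τ), P s) ∧
          ((P (t + τ) ∧ P' (t + τ)) ∨
            (∃ t' ∈ Set.Ioc (t + τ) (t + b), P' t' ∧ ∀ s ∈ Set.Icc t t', P s)))) := by
  rw [exists_mem_Ioc_iff_split (c := t + τ) (by linarith) (by linarith),
    forall_mem_Icc_iff_forall_mem_Ico_and (by linarith : t ≤ t + τ)]
  have hlate : (∃ t' ∈ Ioc (t + τ) (t + b), P' t' ∧ ∀ s ∈ Icc t t', P s) →
      ∀ s ∈ Ico t (t + τ), P s := fun ⟨_, ⟨hτt', _⟩, _, hP⟩ s hs =>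
    hP s ⟨hs.1, hs.2.le.trans hτt'.le⟩
  generalize (∃ t' ∈ Ioc (t + τ) (t + b), P' t' ∧ ∀ s ∈ Icc t t', P s) = late at hlate ⊢
  generalize (∃ t' ∈ Ioo (t + a) (t + τ), P' t' ∧ ∀ s ∈ Icc t t', P s) = early
  generalize (∀ s ∈ Ico t (t + τ), P s) = before at hlate ⊢
  tauto
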